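/- Suppose (ν̃, μ̃) is a global minimizer of L̃ over all pairs of functions S → ℝ. Set C := log ∑_s exp(−μ̃(s) − 1). Then the shifted pair (ν̃ + (C/(1−γ))·𝟙, μ̃ + C·𝟙) is a global minimizer of L, and the value of L at this shifted pair equals L̃(ν̃, μ̃). -/

import Mathlib

open scoped BigOperators

noncomputable def eFn {S A : Type*} [Fintype S] (γ : ℝ) (T : S → A → S → ℝ)
    (ν μ : S → ℝ) (s : S) (a : A) : ℝ :=
  μ s + γ * ∑ s', T s a s' * ν s' - ν s

noncomputable def Lobj {S A : Type*} [Fintype S] [Fintype A] (γ : ℝ) (p0 : S → ℝ)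
    (T : S → A → S → ℝ) (dD : S → A → ℝ) (α : ℝ) (φ : ℝ → ℝ) (ν μ : S → ℝ) : ℝ :=
  (1 - γ) * ∑ s, p0 s * ν s
    + ∑ s, ∑ a, dD s a * (α * φ (eFn γ T ν μ s a / α))
    + ∑ s, Real.exp (-μ s - 1)

noncomputable def Ltilde {S A : Type*} [Fintype S] [Fintype A] (γ : ℝ) (p0 : S → ℝ)
    (T : S → A → S → ℝ) (dD : S → A → ℝ) (α : ℝ) (φ : ℝ → ℝ) (ν μ : S → ℝ) : ℝ :=
  (1 - γ) * ∑ s, p0 s * ν s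
    + ∑ s, ∑ a, dD s a * (α * φ (eFn γ T ν μ s a / α))
    + Real.log (∑ s, Real.exp (-μ s))

/-!
The pointwise bound `log y ≤ y / e` gives `L̃ ≤ L` everywhere. Conversely, shifting `(ν, μ)` by
`(c / (1 - γ), c)` leaves every Bellman residual `e_{ν,μ}` unchanged, raises the linear term by `c`
and scales `∑ exp (-μ - 1)` by `exp (-c)`; the choice `c = log ∑ exp (-μ - 1)` makes the two
objectives agree at the shifted point. Hence the shift of a minimiser of `L̃` attains
`min L̃ ≤ min L`.
-/

open Finset Real

lemma Real.log_le_mul_exp_neg_one {y : ℝ} (hy : 0 ≤ y) : log y ≤ y * exp (-1) := by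
  obtain rfl | hy := hy.eq_or_lt
  · simp
  have h := log_le_sub_one_of_pos (mul_pos hy (exp_pos (-1)))
  rw [log_mul hy.ne' (exp_ne_zero _), log_exp] at h
  linarith

lemma sum_exp_sub_one {S : Type*} [Fintype S] (x : S → ℝ) :
    ∑ s, exp (x s - 1) = (∑ s, exp (x s)) * exp (-1) := by
  simp only [sum_mul, ← exp_add, sub_eq_add_neg]

lemma log_sum_exp_le_sum_exp_sub_one {S : Type*} [Fintype S] (x : S → ℝ) :
    log (∑ s, exp (x s)) ≤ ∑ s, exp (x s - 1) := by
  rw [sum_exp_sub_one]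
  exact log_le_mul_exp_neg_one (sum_nonneg fun s _ => (exp_pos _).le)

lemma log_sum_exp_sub_one {S : Type*} [Fintype S] [Nonempty S] (x : S → ℝ) :
    log (∑ s, exp (x s - 1)) = log (∑ s, exp (x s)) - 1 := by
  have hpos : 0 < ∑ s, exp (x s) := sum_pos (fun s _ => exp_pos _) univ_nonempty
  rw [sum_exp_sub_one, log_mul hpos.ne' (exp_ne_zero _), log_exp, sub_eq_add_neg]

lemma eFn_add_const {S A : Type*} [Fintype S] (γ : ℝ) (T : S → A → S → ℝ) {s : S} {a : A}
    (hT : ∑ s', T s a s' = 1) (ν μ : S → ℝ) (b c : ℝ) :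
    eFn γ T (fun s => ν s + b) (fun s => μ s + c) s a = eFn γ T ν μ s a + c - (1 - γ) * b := by
  simp only [eFn, mul_add, sum_add_distrib, ← sum_mul, hT]
  ring

section Objectives

variable {S A : Type*} [Fintype S] [Fintype A] (γ : ℝ) (p0 : S → ℝ) (T : S → A → S → ℝ)
  (dD : S → A → ℝ) (α : ℝ) (φ : ℝ → ℝ)

lemma Ltilde_le_Lobj (ν μ : S → ℝ) : Ltilde γ p0 T dD α φ ν μ ≤ Lobj γ p0 T dD α φ ν μ := by
  have h := log_sum_exp_le_sum_exp_sub_one fun s => -μ s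
  simp only [Ltilde, Lobj]
  linarith

lemma Lobj_shift (hγ : γ ≠ 1) (hp0 : ∑ s, p0 s = 1) (hT : ∀ s a, ∑ s', T s a s' = 1)
    (ν μ : S → ℝ) (c : ℝ) :
    Lobj γ p0 T dD α φ (fun s => ν s + c / (1 - γ)) (fun s => μ s + c)
      = (1 - γ) * ∑ s, p0 s * ν s + ∑ s, ∑ a, dD s a * (α * φ (eFn γ T ν μ s a / α))
        + c + exp (-c) * ∑ s, exp (-μ s - 1) := by
  have h1γ : 1 - γ ≠ 0 := sub_ne_zero.mpr hγ.symm
  have hlin : (1 - γ) * ∑ s, p0 s * (ν s + c / (1 - γ)) = (1 - γ) * ∑ s, p0 s * ν s + c := by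
    simp only [mul_add, sum_add_distrib, ← sum_mul, hp0]
    field_simp
  have hres : ∀ s a, eFn γ T (fun s => ν s + c / (1 - γ)) (fun s => μ s + c) s a
      = eFn γ T ν μ s a := fun s a => by
    rw [eFn_add_const γ T (hT s a), mul_div_cancel₀ _ h1γ]
    ring
  have hexp : ∑ s, exp (-(μ s + c) - 1) = exp (-c) * ∑ s, exp (-μ s - 1) := by
    rw [mul_sum]
    refine sum_congr rfl fun s _ => ?_
    rw [← exp_add]
    ring_nf
  simp only [Lobj, hlin, hres, hexp]
  ring

lemma Lobj_shift_eq_Ltilde [Nonempty S] (hγ : γ ≠ 1) (hp0 : ∑ s, p0 s = 1)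
    (hT : ∀ s a, ∑ s', T s a s' = 1) (ν μ : S → ℝ) {C : ℝ} (hC : C = log (∑ s, exp (-μ s - 1))) :
    Lobj γ p0 T dD α φ (fun s => ν s + C / (1 - γ)) (fun s => μ s + C)
      = Ltilde γ p0 T dD α φ ν μ := by
  have hpos : 0 < ∑ s, exp (-μ s - 1) := sum_pos (fun s _ => exp_pos _) univ_nonempty
  rw [Lobj_shift γ p0 T dD α φ hγ hp0 hT, exp_neg, hC, exp_log hpos, inv_mul_cancel₀ hpos.ne',
    log_sum_exp_sub_one, Ltilde]
  ring

end Objectives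

theorem stmt2_general {S A : Type*} [Fintype S] [Fintype A] [Nonempty S]
    (γ : ℝ) (hγ : γ ∈ Set.Ioo (0:ℝ) 1)
    (p0 : S → ℝ) (hp0sum : ∑ s, p0 s = 1)
    (T : S → A → S → ℝ)
    (hTsum : ∀ s a, ∑ s', T s a s' = 1)
    (dD : S → A → ℝ)
    (α : ℝ) (φ : ℝ → ℝ)
    (νt μt : S → ℝ)
    (hmin : ∀ ν μ : S → ℝ, Ltilde γ p0 T dD α φ νt μt ≤ Ltilde γ p0 T dD α φ ν μ)
    (C : ℝ) (hC : C = Real.log (∑ s, Real.exp (-μt s - 1))) :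
    (∀ ν μ : S → ℝ,
        Lobj γ p0 T dD α φ (fun s => νt s + C / (1 - γ)) (fun s => μt s + C)
          ≤ Lobj γ p0 T dD α φ ν μ) ∧
      Lobj γ p0 T dD α φ (fun s => νt s + C / (1 - γ)) (fun s => μt s + C)
        = Ltilde γ p0 T dD α φ νt μt := by
  have heq := Lobj_shift_eq_Ltilde γ p0 T dD α φ hγ.2.ne hp0sum hTsum νt μt hC
  refine ⟨fun ν μ => ?_, heq⟩
  calc _ = Ltilde γ p0 T dD α φ νt μt := heq
    _ ≤ Ltilde γ p0 T dD α φ ν μ := hmin ν μ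
    _ ≤ Lobj γ p0 T dD α φ ν μ := Ltilde_le_Lobj γ p0 T dD α φ ν μ

theorem stmt2 {S A : Type*} [Fintype S] [Fintype A] [Nonempty S] [Nonempty A]
    (γ : ℝ) (hγ : γ ∈ Set.Ioo (0:ℝ) 1)
    (p0 : S → ℝ) (hp0 : ∀ s, 0 ≤ p0 s) (hp0sum : ∑ s, p0 s = 1)
    (T : S → A → S → ℝ) (hT : ∀ s a s', 0 ≤ T s a s')
    (hTsum : ∀ s a, ∑ s', T s a s' = 1)
    (dD : S → A → ℝ) (hdD : ∀ s a, 0 ≤ dD s a) (hdDsum : ∑ s, ∑ a, dD s a = 1)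
    (α : ℝ) (hα : 0 < α) (φ : ℝ → ℝ)
    (νt μt : S → ℝ)
    (hmin : ∀ ν μ : S → ℝ, Ltilde γ p0 T dD α φ νt μt ≤ Ltilde γ p0 T dD α φ ν μ)
    (C : ℝ) (hC : C = Real.log (∑ s, Real.exp (-μt s - 1))) :
    (∀ ν μ : S → ℝ,
        Lobj γ p0 T dD α φ (fun s => νt s + C / (1 - γ)) (fun s => μt s + C)
          ≤ Lobj γ p0 T dD α φ ν μ) ∧
      Lobj γ p0 T dD α φ (fun s => νt s + C / (1 - γ)) (fun s => μt s + C)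
        = Ltilde γ p0 T dD α φ νt μt :=
  stmt2_general γ hγ p0 hp0sum T hTsum dD α φ νt μt hmin C hC
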